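/- The function u(x,y) = log((√(x² + y²) + y)/x), defined on the quarter-plane {(x,y) : x > 0, y > 0}, satisfies the minimal vertical graph equation (1 + y²u_x²)u_yy + (1 + y²u_y²)u_xx − 2y²u_x u_y u_xy − y u_y(u_x² + u_y²) = 0. -/

import Mathlib

noncomputable def px (u : ℝ → ℝ → ℝ) (x y : ℝ) : ℝ := deriv (fun x' => u x' y) x
noncomputable def py (u : ℝ → ℝ → ℝ) (x y : ℝ) : ℝ := deriv (fun y' => u x y') y
noncomputable def pxx (u : ℝ → ℝ → ℝ) (x y : ℝ) : ℝ := deriv (fun x' => px u x' y) x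
noncomputable def pyy (u : ℝ → ℝ → ℝ) (x y : ℝ) : ℝ := deriv (fun y' => py u x y') y
noncomputable def pxy (u : ℝ → ℝ → ℝ) (x y : ℝ) : ℝ := deriv (fun y' => px u x y') y

/-- The minimal vertical graph equation in the upper half-plane model of `ℍ²`. -/
def MinimalEqHalfPlane (u : ℝ → ℝ → ℝ) (x y : ℝ) : Prop :=
  (1 + y ^ 2 * (px u x y) ^ 2) * pyy u x y + (1 + y ^ 2 * (py u x y) ^ 2) * pxx u x y
    - 2 * y ^ 2 * px u x y * py u x y * pxy u x y
    - y * py u x y * ((px u x y) ^ 2 + (py u x y) ^ 2) = 0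

/-!
With `r = √(x² + y²)` we have `u = log (r + y) - log |x|`, so `r_x = x / r` and `r_y = y / r`
give `u_x = -y / (x r)` and `u_y = 1 / r`, and then
`u_xx = y (r² + x²) / (x² r³)`, `u_yy = -y / r³`, `u_xy = -x / r³`.
Substituting into the equation and clearing denominators leaves a polynomial identity modulo
`r² = x² + y²`.
-/

open Real Filter Topology

lemma hasDerivAt_sqrt_sq_add {c t : ℝ} (h : 0 < t ^ 2 + c) :
    HasDerivAt (fun t => √(t ^ 2 + c)) (t / √(t ^ 2 + c)) t := by
  have := ((hasDerivAt_pow 2 t).add_const c).sqrt h.ne'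
  convert this using 1
  field_simp
  ring

lemma hasDerivAt_sqrt_add_sq {c t : ℝ} (h : 0 < c + t ^ 2) :
    HasDerivAt (fun t => √(c + t ^ 2)) (t / √(c + t ^ 2)) t := by
  simpa only [add_comm c] using hasDerivAt_sqrt_sq_add (c := c) (by rwa [add_comm])

lemma sq_sqrt_sq_add_sq (x y : ℝ) : √(x ^ 2 + y ^ 2) ^ 2 = x ^ 2 + y ^ 2 :=
  sq_sqrt (by positivity)

noncomputable def invariantSolution : ℝ → ℝ → ℝ :=
  fun x y => log ((√(x ^ 2 + y ^ 2) + y) / x)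

section Derivatives

variable {x : ℝ} (y : ℝ) (hx : x ≠ 0)
include hx

lemma sq_add_sq_pos : 0 < x ^ 2 + y ^ 2 := by positivity

lemma sqrt_sq_add_sq_add_pos : 0 < √(x ^ 2 + y ^ 2) + y := by
  have hx2 : 0 < x ^ 2 := by positivity
  have : -y < √(x ^ 2 + y ^ 2) := lt_sqrt_of_sq_lt (by linarith [neg_sq y])
  linarith

lemma hasDerivAt_invariantSolution_x :
    HasDerivAt (fun x' => invariantSolution x' y) (-y / (x * √(x ^ 2 + y ^ 2))) x := by
  have hry := sqrt_sq_add_sq_add_pos y hx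
  have hr2 := sq_sqrt_sq_add_sq x y
  have hquot : HasDerivAt (fun x' => (√(x' ^ 2 + y ^ 2) + y) / x')
      ((x / √(x ^ 2 + y ^ 2) * x - (√(x ^ 2 + y ^ 2) + y)) / x ^ 2) x := by
    simpa using ((hasDerivAt_sqrt_sq_add (sq_add_sq_pos y hx)).add_const y).fun_div
      (hasDerivAt_id x) hx
  refine (hquot.log (div_ne_zero hry.ne' hx)).congr_deriv ?_
  field_simp
  linear_combination (-1) * hr2

lemma hasDerivAt_invariantSolution_y :
    HasDerivAt (fun y' => invariantSolution x y') (1 / √(x ^ 2 + y ^ 2)) y := by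
  have hry := sqrt_sq_add_sq_add_pos y hx
  have hquot : HasDerivAt (fun y' => (√(x ^ 2 + y' ^ 2) + y') / x)
      ((y / √(x ^ 2 + y ^ 2) + 1) / x) y :=
    ((hasDerivAt_sqrt_add_sq (sq_add_sq_pos y hx)).add (hasDerivAt_id y)).div_const x
  refine (hquot.log (div_ne_zero hry.ne' hx)).congr_deriv ?_
  field_simp
  ring

lemma px_invariantSolution : px invariantSolution x y = -y / (x * √(x ^ 2 + y ^ 2)) :=
  (hasDerivAt_invariantSolution_x y hx).deriv

lemma py_invariantSolution : py invariantSolution x y = 1 / √(x ^ 2 + y ^ 2) :=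
  (hasDerivAt_invariantSolution_y y hx).deriv

lemma pxx_invariantSolution :
    pxx invariantSolution x y =
      y * (√(x ^ 2 + y ^ 2) ^ 2 + x ^ 2) / (x ^ 2 * √(x ^ 2 + y ^ 2) ^ 3) := by
  have hpx : (fun x' => px invariantSolution x' y) =ᶠ[𝓝 x]
      fun x' => -y / (x' * √(x' ^ 2 + y ^ 2)) := by
    filter_upwards [eventually_ne_nhds hx] with x' hx' using px_invariantSolution y hx'
  have hquot := (hasDerivAt_const x (-y)).fun_div
    ((hasDerivAt_id' x).fun_mul (hasDerivAt_sqrt_sq_add (sq_add_sq_pos y hx))) (by positivity)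
  rw [pxx, hpx.deriv_eq, hquot.deriv]
  field_simp
  ring

lemma pyy_invariantSolution : pyy invariantSolution x y = -y / √(x ^ 2 + y ^ 2) ^ 3 := by
  have hpy : (fun y' => py invariantSolution x y') = fun y' => 1 / √(x ^ 2 + y' ^ 2) :=
    funext fun y' => py_invariantSolution y' hx
  have hquot := (hasDerivAt_const y (1 : ℝ)).fun_div
    (hasDerivAt_sqrt_add_sq (sq_add_sq_pos y hx)) (by positivity)
  rw [pyy, hpy, hquot.deriv]
  field_simp
  ring

lemma pxy_invariantSolution : pxy invariantSolution x y = -x / √(x ^ 2 + y ^ 2) ^ 3 := by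
  have hr2 := sq_sqrt_sq_add_sq x y
  have hpx : (fun y' => px invariantSolution x y') = fun y' => -y' / (x * √(x ^ 2 + y' ^ 2)) :=
    funext fun y' => px_invariantSolution y' hx
  have hquot := (hasDerivAt_id' y).fun_neg.fun_div
    ((hasDerivAt_sqrt_add_sq (sq_add_sq_pos y hx)).const_mul x) (by positivity)
  rw [pxy, hpx, hquot.deriv]
  field_simp
  linear_combination (-1) * hr2

theorem minimalEqHalfPlane_invariantSolution : MinimalEqHalfPlane invariantSolution x y := by
  have hr2 := sq_sqrt_sq_add_sq x y
  rw [MinimalEqHalfPlane, px_invariantSolution y hx, py_invariantSolution y hx,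
    pxx_invariantSolution y hx, pyy_invariantSolution y hx, pxy_invariantSolution y hx]
  field_simp
  linear_combination (y * (√(x ^ 2 + y ^ 2) ^ 2 + y ^ 2)) * hr2

end Derivatives

/-- `u(x,y) = log((√(x²+y²) + y)/x)` satisfies the minimal vertical graph
equation on the quarter-plane `{x > 0, y > 0}`. -/
theorem stmt_9 :
    ∀ x y : ℝ, 0 < x → 0 < y →
      MinimalEqHalfPlane
        (fun x y => Real.log ((Real.sqrt (x ^ 2 + y ^ 2) + y) / x)) x y :=
  fun _ y hx _ => minimalEqHalfPlane_invariantSolution y hx.ne'
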